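/- arXiv:1912.01170 — 2 statements merged into one kernel-verified Lean document; each statement's English description precedes it below -/
import Mathlib

section
/- Fix a finite alphabet 𝒳 and probability mass functions P₁, P₂ on 𝒳 with full support. For α > 0 and λ ≥ 0 define F₁(α,λ) = inf{ D(Q₁‖P₁) + (1/α)·D(Q₂‖P₂) : (Q₁,Q₂) ∈ 𝒫(𝒳)², (1/α)·GJS(Q₁,Q₂,α) ≤ λ }. Then the map α ↦ sup_{λ ≥ 0} min{ λ, F₁(α,λ) } (the Bayesian error exponent of Gutman's test) is nonincreasing in α on (0,∞). -/
open Filter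

namespace SeqClass

variable {𝒳 : Type*} [Fintype 𝒳] [DecidableEq 𝒳]

/-- `P` is a probability mass function on `𝒳`. -/
def IsPMF (P : 𝒳 → ℝ) : Prop := (∀ x, 0 ≤ P x) ∧ ∑ x, P x = 1

/-- `P` has full support. -/
def FullSupport (P : 𝒳 → ℝ) : Prop := ∀ x, 0 < P x

/-- Kullback–Leibler divergence `D(P‖Q)`. -/
noncomputable def KL (P Q : 𝒳 → ℝ) : ℝ := ∑ x, P x * Real.log (P x / Q x)

/-- Shannon entropy `H(P)`. -/
noncomputable def shEnt (P : 𝒳 → ℝ) : ℝ := -∑ x, P x * Real.log (P x)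

/-- The mixture `(α•P + Q)/(1+α)`. -/
noncomputable def mix (P Q : 𝒳 → ℝ) (α : ℝ) : 𝒳 → ℝ := fun x => (α * P x + Q x) / (1 + α)

/-- Generalized Jensen–Shannon divergence `GJS(P,Q,α) = α D(P‖P_α) + D(Q‖P_α)`. -/
noncomputable def GJS (P Q : 𝒳 → ℝ) (α : ℝ) : ℝ := α * KL P (mix P Q α) + KL Q (mix P Q α)

/-- Chernoff information `C(P,Q)`. -/
noncomputable def chernoff (P Q : 𝒳 → ℝ) : ℝ :=
  -(⨅ η : (Set.Icc (0:ℝ) 1), Real.log (∑ x, P x ^ (η : ℝ) * Q x ^ (1 - (η : ℝ))))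

/-- Empirical distribution (type) of a finite sequence. -/
noncomputable def empDist {n : ℕ} (x : Fin n → 𝒳) : 𝒳 → ℝ :=
  fun a => ((Finset.univ.filter fun i => x i = a).card : ℝ) / n

/-- Type of the length-`n` prefix of `y`. -/
noncomputable def prefixType {m : ℕ} (y : Fin m → 𝒳) (n : ℕ) : 𝒳 → ℝ :=
  fun a => ((Finset.univ.filter fun k : Fin m => (k : ℕ) < n ∧ y k = a).card : ℝ) / n

/-- i.i.d. product probability of a finite sequence. -/
noncomputable def prodProb {n : ℕ} (P : 𝒳 → ℝ) (x : Fin n → 𝒳) : ℝ := ∏ i, P (x i)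

/-- The exponent `F₁(α,λ)` from Gutman's test. -/
noncomputable def F1 (P1 P2 : 𝒳 → ℝ) (α lam : ℝ) : ℝ :=
  sInf {v : ℝ | ∃ Q1 Q2 : 𝒳 → ℝ, IsPMF Q1 ∧ IsPMF Q2 ∧
    (1 / α) * GJS Q1 Q2 α ≤ lam ∧ v = KL Q1 P1 + (1 / α) * KL Q2 P2}

/-- Bayesian error exponent of Gutman's test with training-to-test ratio `α`. -/
noncomputable def gutmanBayes (P1 P2 : 𝒳 → ℝ) (α : ℝ) : ℝ :=
  sSup {e : ℝ | ∃ lam : ℝ, 0 ≤ lam ∧ e = min lam (F1 P1 P2 α lam)}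

end SeqClass

/-!
For fixed `λ`, `F₁(α, λ)` is nonincreasing in `α`: the weight `1/α` on `D(Q₂‖P₂)` shrinks,
and the feasible set grows because
`(1/α)·GJS(Q₁,Q₂,α) = min_Q D(Q₁‖Q) + (1/α)·D(Q₂‖Q)`
is nonincreasing in `α`; the minimum is attained at `Q = P_α` by the compensation identity
`α D(Q₁‖Q) + D(Q₂‖Q) = GJS(Q₁,Q₂,α) + (1+α) D(P_α‖Q)`.
Taking `min λ ·` and then the supremum over `λ` preserves this monotonicity.
-/

namespace SeqClass

open Set

variable {𝒳 : Type*}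

theorem sub_le_mul_log_div {p q : ℝ} (hp : 0 ≤ p) (hq : 0 ≤ q) (hpq : 0 < q → 0 < p) :
    q - p ≤ q * Real.log (q / p) := by
  rcases hq.eq_or_lt with rfl | hq
  · simpa using hp
  have hlog := Real.one_sub_inv_le_log_of_pos (div_pos hq (hpq hq))
  rw [inv_div] at hlog
  calc q - p = q * (1 - p / q) := by field_simp
    _ ≤ q * Real.log (q / p) := mul_le_mul_of_nonneg_left hlog hq.le

theorem mul_log_div_eq_add {a m q : ℝ} (ha : 0 ≤ a) (hm : 0 < m) (hq : 0 < q) :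
    a * Real.log (a / q) = a * Real.log (a / m) + a * Real.log (m / q) := by
  rcases ha.eq_or_lt with rfl | ha
  · simp
  rw [Real.log_div ha.ne' hq.ne', Real.log_div ha.ne' hm.ne', Real.log_div hm.ne' hq.ne']
  ring

theorem mix_self (P : 𝒳 → ℝ) {α : ℝ} (hα : 1 + α ≠ 0) : mix P P α = P := by
  funext x
  simp only [mix]
  field_simp
  ring

theorem mix_pos_iff {Q1 Q2 : 𝒳 → ℝ} {α : ℝ} (hα : 0 < α) (h1 : ∀ x, 0 ≤ Q1 x)
    (h2 : ∀ x, 0 ≤ Q2 x) (x : 𝒳) : 0 < mix Q1 Q2 α x ↔ 0 < Q1 x ∨ 0 < Q2 x := by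
  rw [mix, div_pos_iff_of_pos_right (by linarith)]
  constructor
  · intro h
    by_contra! hc
    nlinarith [h1 x, h2 x]
  · rintro (h | h) <;> nlinarith [h1 x, h2 x]

variable [Fintype 𝒳]

theorem KL_nonneg {Q P : 𝒳 → ℝ} (hQ : IsPMF Q) (hP : IsPMF P)
    (hsupp : ∀ x, 0 < Q x → 0 < P x) : 0 ≤ KL Q P :=
  calc 0 = ∑ x, Q x - ∑ x, P x := by rw [hQ.2, hP.2, sub_self]
    _ = ∑ x, (Q x - P x) := (Finset.sum_sub_distrib _ _).symm
    _ ≤ KL Q P := Finset.sum_le_sum fun x _ => sub_le_mul_log_div (hP.1 x) (hQ.1 x) (hsupp x)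

theorem KL_nonneg_of_fullSupport {Q P : 𝒳 → ℝ} (hQ : IsPMF Q) (hP : IsPMF P)
    (hPs : FullSupport P) : 0 ≤ KL Q P :=
  KL_nonneg hQ hP fun x _ => hPs x

@[simp]
theorem KL_self (P : 𝒳 → ℝ) : KL P P = 0 :=
  Finset.sum_eq_zero fun x _ => by by_cases hx : P x = 0 <;> simp [hx]

theorem GJS_self (P : 𝒳 → ℝ) {α : ℝ} (hα : 1 + α ≠ 0) : GJS P P α = 0 := by
  simp [GJS, mix_self P hα]

theorem isPMF_mix {Q1 Q2 : 𝒳 → ℝ} {α : ℝ} (hα : 0 ≤ α) (h1 : IsPMF Q1) (h2 : IsPMF Q2) :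
    IsPMF (mix Q1 Q2 α) := by
  refine ⟨fun x => div_nonneg (by nlinarith [h1.1 x, h2.1 x]) (by linarith), ?_⟩
  simp only [mix]
  rw [← Finset.sum_div, Finset.sum_add_distrib, ← Finset.mul_sum, h1.2, h2.2]
  field_simp
  ring

theorem mul_KL_add_KL_eq_GJS_add {Q1 Q2 Q : 𝒳 → ℝ} {α : ℝ} (hα : 0 < α) (h1 : IsPMF Q1)
    (h2 : IsPMF Q2) (hsupp : ∀ x, 0 < mix Q1 Q2 α x → 0 < Q x) :
    α * KL Q1 Q + KL Q2 Q = GJS Q1 Q2 α + (1 + α) * KL (mix Q1 Q2 α) Q := by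
  simp only [GJS, KL, Finset.mul_sum, ← Finset.sum_add_distrib]
  refine Finset.sum_congr rfl fun x _ => ?_
  by_cases hM : 0 < mix Q1 Q2 α x
  · have hQ := hsupp x hM
    have hmix : (1 + α) * mix Q1 Q2 α x = α * Q1 x + Q2 x := by
      simp only [mix]
      field_simp
    rw [mul_log_div_eq_add (h1.1 x) hM hQ, mul_log_div_eq_add (h2.1 x) hM hQ]
    linear_combination (-Real.log (mix Q1 Q2 α x / Q x)) * hmix
  · rw [mix_pos_iff hα h1.1 h2.1, not_or, not_lt, not_lt] at hM
    have hq1 := le_antisymm hM.1 (h1.1 x)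
    have hq2 := le_antisymm hM.2 (h2.1 x)
    simp [mix, hq1, hq2]

theorem GJS_le_mul_KL_add_KL {Q1 Q2 Q : 𝒳 → ℝ} {α : ℝ} (hα : 0 < α) (h1 : IsPMF Q1)
    (h2 : IsPMF Q2) (hQ : IsPMF Q) (hsupp : ∀ x, 0 < mix Q1 Q2 α x → 0 < Q x) :
    GJS Q1 Q2 α ≤ α * KL Q1 Q + KL Q2 Q := by
  rw [mul_KL_add_KL_eq_GJS_add hα h1 h2 hsupp]
  have := KL_nonneg (isPMF_mix hα.le h1 h2) hQ hsupp
  nlinarith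

theorem antitoneOn_one_div_mul_GJS {Q1 Q2 : 𝒳 → ℝ} (h1 : IsPMF Q1) (h2 : IsPMF Q2) :
    AntitoneOn (fun α => 1 / α * GJS Q1 Q2 α) (Ioi 0) := by
  intro α (hα : 0 < α) β (hβ : 0 < β) hab
  set M := mix Q1 Q2 α with hM_def
  have hM : IsPMF M := isPMF_mix hα.le h1 h2
  have hsupp : ∀ x, 0 < mix Q1 Q2 β x → 0 < M x := fun x hx =>
    (mix_pos_iff hα h1.1 h2.1 x).2 ((mix_pos_iff hβ h1.1 h2.1 x).1 hx)
  have hKL2 : 0 ≤ KL Q2 M :=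
    KL_nonneg h2 hM fun x hx => (mix_pos_iff hα h1.1 h2.1 x).2 (Or.inr hx)
  calc 1 / β * GJS Q1 Q2 β ≤ 1 / β * (β * KL Q1 M + KL Q2 M) := by
        gcongr
        exact GJS_le_mul_KL_add_KL hβ h1 h2 hM hsupp
    _ = KL Q1 M + 1 / β * KL Q2 M := by field_simp
    _ ≤ KL Q1 M + 1 / α * KL Q2 M := by gcongr
    _ = 1 / α * GJS Q1 Q2 α := by rw [GJS, ← hM_def]; field_simp

section F1

variable {P1 P2 : 𝒳 → ℝ} {α lam : ℝ}

theorem F1_le (hP1 : IsPMF P1) (hP2 : IsPMF P2) (hs1 : FullSupport P1) (hs2 : FullSupport P2)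
    (hα : 0 < α) {Q1 Q2 : 𝒳 → ℝ} (hQ1 : IsPMF Q1) (hQ2 : IsPMF Q2)
    (hfeas : 1 / α * GJS Q1 Q2 α ≤ lam) :
    F1 P1 P2 α lam ≤ KL Q1 P1 + 1 / α * KL Q2 P2 := by
  refine csInf_le ⟨0, ?_⟩ ⟨Q1, Q2, hQ1, hQ2, hfeas, rfl⟩
  rintro _ ⟨R1, R2, hR1, hR2, -, rfl⟩
  have := KL_nonneg_of_fullSupport hR1 hP1 hs1
  have := KL_nonneg_of_fullSupport hR2 hP2 hs2
  positivity

theorem le_F1 (hP1 : IsPMF P1) (hα : 0 < α) (hlam : 0 ≤ lam) {c : ℝ}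
    (h : ∀ Q1 Q2, IsPMF Q1 → IsPMF Q2 → 1 / α * GJS Q1 Q2 α ≤ lam →
      c ≤ KL Q1 P1 + 1 / α * KL Q2 P2) :
    c ≤ F1 P1 P2 α lam := by
  refine le_csInf ⟨_, P1, P1, hP1, hP1, ?_, rfl⟩ ?_
  · simpa [GJS_self P1 (by linarith : 1 + α ≠ 0)] using hlam
  · rintro _ ⟨Q1, Q2, hQ1, hQ2, hfeas, rfl⟩
    exact h Q1 Q2 hQ1 hQ2 hfeas

theorem F1_le_one_div_mul_KL (hP1 : IsPMF P1) (hP2 : IsPMF P2) (hs1 : FullSupport P1)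
    (hs2 : FullSupport P2) (hα : 0 < α) (hlam : 0 ≤ lam) :
    F1 P1 P2 α lam ≤ 1 / α * KL P1 P2 := by
  simpa using F1_le hP1 hP2 hs1 hs2 hα hP1 hP1
    (by simpa [GJS_self P1 (by linarith : 1 + α ≠ 0)] using hlam)

theorem antitoneOn_F1 (hP1 : IsPMF P1) (hP2 : IsPMF P2) (hs1 : FullSupport P1)
    (hs2 : FullSupport P2) (hlam : 0 ≤ lam) :
    AntitoneOn (fun α => F1 P1 P2 α lam) (Ioi 0) := by
  intro α (hα : 0 < α) β (hβ : 0 < β) hab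
  refine le_F1 hP1 hα hlam fun Q1 Q2 hQ1 hQ2 hfeas => ?_
  have := KL_nonneg_of_fullSupport hQ2 hP2 hs2
  calc F1 P1 P2 β lam ≤ KL Q1 P1 + 1 / β * KL Q2 P2 := F1_le hP1 hP2 hs1 hs2 hβ hQ1 hQ2
        ((antitoneOn_one_div_mul_GJS hQ1 hQ2 hα hβ hab).trans hfeas)
    _ ≤ KL Q1 P1 + 1 / α * KL Q2 P2 := by gcongr

end F1

variable [DecidableEq 𝒳]

theorem gutman_bayesian_exponent_antitone
    (P1 P2 : 𝒳 → ℝ) (hP1 : IsPMF P1) (hP2 : IsPMF P2)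
    (hs1 : FullSupport P1) (hs2 : FullSupport P2) :
    AntitoneOn (gutmanBayes P1 P2) (Set.Ioi (0 : ℝ)) := by
  intro α (hα : 0 < α) β hβ hab
  have hbdd : BddAbove {e | ∃ lam, 0 ≤ lam ∧ e = min lam (F1 P1 P2 α lam)} := by
    refine ⟨1 / α * KL P1 P2, ?_⟩
    rintro _ ⟨lam, hlam, rfl⟩
    exact (min_le_right _ _).trans (F1_le_one_div_mul_KL hP1 hP2 hs1 hs2 hα hlam)
  refine csSup_le ⟨_, 0, le_rfl, rfl⟩ ?_
  rintro _ ⟨lam, hlam, rfl⟩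
  have hF1 := antitoneOn_F1 hP1 hP2 hs1 hs2 hlam hα hβ hab
  exact (min_le_min_left lam hF1).trans (le_csSup hbdd ⟨lam, hlam, rfl⟩)

end SeqClass
end

section
/- Let 𝒳 be a finite alphabet and fix α ≥ 0. Then the map (P, Q) ↦ GJS(P, Q, α) is jointly convex on 𝒫(𝒳) × 𝒫(𝒳): for all pairs (P₁,Q₁), (P₂,Q₂) of probability mass functions with full support and all θ ∈ [0,1], GJS(θP₁+(1−θ)P₂, θQ₁+(1−θ)Q₂, α) ≤ θ·GJS(P₁,Q₁,α) + (1−θ)·GJS(P₂,Q₂,α). -/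
/-!
The map `(a, b) ↦ a log (a / b)` is the perspective of the convex function `x ↦ x log x`, hence
jointly convex; summing over the alphabet, `D(P‖Q)` is jointly convex in `(P, Q)`. The mixture
`P_α` depends linearly on `(P, Q)`, so both `D(P‖P_α)` and `D(Q‖P_α)` are jointly convex in
`(P, Q)`, and so is their combination `GJS` with the nonnegative weight `α`.
-/

open Filter

namespace SeqClass

variable {𝒳 : Type*} [Fintype 𝒳] [DecidableEq 𝒳]

open Real Set

lemma convexOn_mul_log_div :
    ConvexOn ℝ (Ici 0 ×ˢ Ioi 0) fun p : ℝ × ℝ => p.1 * log (p.1 / p.2) := by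
  refine ⟨(convex_Ici 0).prod (convex_Ioi 0), ?_⟩
  rintro ⟨a₁, b₁⟩ ⟨ha₁, hb₁⟩ ⟨a₂, b₂⟩ ⟨ha₂, hb₂⟩ s t hs ht hst
  simp only [mem_Ici, mem_Ioi] at ha₁ hb₁ ha₂ hb₂
  simp only [Prod.smul_mk, Prod.mk_add_mk, smul_eq_mul]
  set b := s * b₁ + t * b₂
  have hb : 0 < b := convex_Ioi (0 : ℝ) hb₁ hb₂ hs ht hst
  -- Jensen for `x log x` at the points `aᵢ / bᵢ` with weights `s b₁ / b` and `t b₂ / b`.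
  have hjensen := convexOn_mul_log.2 (mem_Ici.2 (by positivity : 0 ≤ a₁ / b₁))
    (mem_Ici.2 (by positivity : 0 ≤ a₂ / b₂)) (by positivity : 0 ≤ s * b₁ / b)
    (by positivity : 0 ≤ t * b₂ / b) (by rw [← add_div, div_self hb.ne'])
  have hmean : s * b₁ / b * (a₁ / b₁) + t * b₂ / b * (a₂ / b₂) = (s * a₁ + t * a₂) / b := by
    field_simp
  simp only [smul_eq_mul, hmean] at hjensen
  calc (s * a₁ + t * a₂) * log ((s * a₁ + t * a₂) / b)
      = b * ((s * a₁ + t * a₂) / b * log ((s * a₁ + t * a₂) / b)) := by field_simp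
    _ ≤ b * (s * b₁ / b * (a₁ / b₁ * log (a₁ / b₁)) + t * b₂ / b * (a₂ / b₂ * log (a₂ / b₂))) :=
        mul_le_mul_of_nonneg_left hjensen hb.le
    _ = s * (a₁ * log (a₁ / b₁)) + t * (a₂ * log (a₂ / b₂)) := by field_simp

section

variable {ι : Type*}

lemma KL_convex_comb_le [Fintype ι] {P₁ Q₁ P₂ Q₂ : ι → ℝ} (hP₁ : ∀ x, 0 ≤ P₁ x)
    (hP₂ : ∀ x, 0 ≤ P₂ x) (hQ₁ : FullSupport Q₁) (hQ₂ : FullSupport Q₂) {s t : ℝ}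
    (hs : 0 ≤ s) (ht : 0 ≤ t) (hst : s + t = 1) :
    KL (fun x => s * P₁ x + t * P₂ x) (fun x => s * Q₁ x + t * Q₂ x) ≤
      s * KL P₁ Q₁ + t * KL P₂ Q₂ := by
  simp only [KL, Finset.mul_sum, ← Finset.sum_add_distrib]
  refine Finset.sum_le_sum fun x _ => ?_
  simpa using convexOn_mul_log_div.2 (show (P₁ x, Q₁ x) ∈ Ici 0 ×ˢ Ioi 0 from ⟨hP₁ x, hQ₁ x⟩)
    (show (P₂ x, Q₂ x) ∈ Ici 0 ×ˢ Ioi 0 from ⟨hP₂ x, hQ₂ x⟩) hs ht hst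

lemma mix_convex_comb (P₁ Q₁ P₂ Q₂ : ι → ℝ) (α s t : ℝ) :
    mix (fun x => s * P₁ x + t * P₂ x) (fun x => s * Q₁ x + t * Q₂ x) α =
      fun x => s * mix P₁ Q₁ α x + t * mix P₂ Q₂ α x := by
  ext x
  simp only [mix]
  ring

lemma mix_pos {P Q : ι → ℝ} {α : ℝ} (hα : 0 ≤ α) (hP : ∀ x, 0 ≤ P x) (hQ : FullSupport Q) :
    FullSupport (mix P Q α) := fun x => by
  have := hP x; have := hQ x
  unfold mix; positivity

end

theorem gjs_jointly_convex (α : ℝ) (hα : 0 ≤ α) :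
    ∀ P1 Q1 P2 Q2 : 𝒳 → ℝ, IsPMF P1 → IsPMF Q1 → IsPMF P2 → IsPMF Q2 →
      FullSupport P1 → FullSupport Q1 → FullSupport P2 → FullSupport Q2 →
      ∀ θ : ℝ, θ ∈ Set.Icc (0 : ℝ) 1 →
        GJS (fun x => θ * P1 x + (1 - θ) * P2 x) (fun x => θ * Q1 x + (1 - θ) * Q2 x) α ≤
          θ * GJS P1 Q1 α + (1 - θ) * GJS P2 Q2 α := by
  intro P1 Q1 P2 Q2 _ _ _ _ hP1 hQ1 hP2 hQ2 θ ⟨hθ₀, hθ₁⟩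
  have hM1 := mix_pos hα (fun x => (hP1 x).le) hQ1
  have hM2 := mix_pos hα (fun x => (hP2 x).le) hQ2
  have hKLP := KL_convex_comb_le (fun x => (hP1 x).le) (fun x => (hP2 x).le) hM1 hM2 hθ₀
    (sub_nonneg.2 hθ₁) (add_sub_cancel θ 1)
  have hKLQ := KL_convex_comb_le (fun x => (hQ1 x).le) (fun x => (hQ2 x).le) hM1 hM2 hθ₀
    (sub_nonneg.2 hθ₁) (add_sub_cancel θ 1)
  simp only [GJS, mix_convex_comb]
  linarith [mul_le_mul_of_nonneg_left hKLP hα]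

end SeqClass
end
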